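/- arXiv:2306.15648 — 4 statements merged into one kernel-verified Lean document; each statement's English description precedes it below -/
import Mathlib

section
/- For every d ≥ 1 there is a constant c_d > 0 depending only on d such that every convex body K ⊆ ℝ^d whose interior contains the origin satisfies vol(K) · vol(K°) ≥ c_d, where vol denotes Lebesgue measure on ℝ^d. -/
/-!
Choose `v₁, …, v_d ∈ K` maximising `|det (v₁, …, v_d)|`; the maximum is positive because `K`
contains a small multiple of a basis. The map `A` sending an orthonormal basis `eᵢ` to `vᵢ`
carries the simplex `Δ = conv {0, e₁, …, e_d}` into `K`. By Cramer's rule the `j`-th coordinate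
of `y` in the basis `(vᵢ)` is `det (v with vⱼ replaced by y) / det v`, which has absolute value
at most `1` when `y ∈ K` by maximality. These coordinates are `⟪(A⁻¹)* eⱼ, y⟫`, so `(A⁻¹)*`
carries `Δ` into `K°`. Hence `vol K · vol K° ≥ |det A| vol Δ · |det A|⁻¹ vol Δ = (vol Δ)²`.
-/

open MeasureTheory Metric Set Filter Topology
open scoped RealInnerProductSpace ENNReal

theorem LinearMap.det_adjoint {𝕜 E : Type*} [RCLike 𝕜] [NormedAddCommGroup E]
    [InnerProductSpace 𝕜 E] [FiniteDimensional 𝕜 E] (f : E →ₗ[𝕜] E) :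
    LinearMap.det (LinearMap.adjoint f) = star (LinearMap.det f) := by
  classical
  let b := stdOrthonormalBasis 𝕜 E
  rw [← LinearMap.det_toMatrix b.toBasis, ← LinearMap.det_toMatrix b.toBasis,
    LinearMap.toMatrix_adjoint, Matrix.det_conjTranspose]

theorem image_convexHull_insert_zero_range_subset {E F : Type*} [AddCommGroup E] [Module ℝ E]
    [AddCommGroup F] [Module ℝ F] {ι : Type*} (b : ι → E) (f : E →ₗ[ℝ] F) {C : Set F}
    (hC : Convex ℝ C) (h0 : 0 ∈ C) (hb : ∀ i, f (b i) ∈ C) :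
    f '' convexHull ℝ (insert 0 (range b)) ⊆ C := by
  rw [image_subset_iff]
  refine convexHull_min ?_ (hC.linear_preimage f)
  rintro _ (rfl | ⟨i, rfl⟩)
  · simpa using h0
  · exact hb i

namespace Module.Basis

variable {E ι : Type*}

theorem abs_coord_le_one_of_abs_det_le [AddCommGroup E] [Module ℝ E] [Fintype ι] [DecidableEq ι]
    (b : Basis ι ℝ E) {K : Set E} {v : ι → E} (hli : LinearIndependent ℝ v)
    (hsp : ⊤ ≤ Submodule.span ℝ (range v))
    (hvK : ∀ i, v i ∈ K) (hmax : ∀ w : ι → E, (∀ i, w i ∈ K) → |b.det w| ≤ |b.det v|)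
    {y : E} (hy : y ∈ K) (j : ι) :
    |(Basis.mk hli hsp).coord j y| ≤ 1 := by
  have hdet : b.det v ≠ 0 := (b.is_basis_iff_det.1 ⟨hli, top_le_iff.1 hsp⟩).ne_zero
  have hcramer : b.det v * (Basis.mk hli hsp).coord j y = b.det (Function.update v j y) :=
    LinearMap.congr_fun (b.det_smul_mk_coord_eq_det_update hli hsp j) y
  have hle := hmax (Function.update v j y) fun i => by
    rcases eq_or_ne i j with rfl | hij
    · simpa using hy
    · simpa [hij] using hvK i
  rw [← hcramer, abs_mul] at hle
  exact (mul_le_iff_le_one_right (abs_pos.2 hdet)).1 hle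

variable [NormedAddCommGroup E] [NormedSpace ℝ E]

theorem exists_pos_forall_smul_mem_of_mem_nhds [Finite ι] (b : Basis ι ℝ E) {K : Set E}
    (hK : K ∈ 𝓝 0) :
    ∃ c : ℝ, 0 < c ∧ ∀ i, c • b i ∈ K := by
  have h : ∀ᶠ c : ℝ in 𝓝 0, ∀ i, c • b i ∈ K := eventually_all.2 fun i =>
    (continuous_id.smul continuous_const).continuousAt.preimage_mem_nhds (by simpa using hK)
  obtain ⟨c, hcK, hc⟩ :=
    ((h.filter_mono nhdsWithin_le_nhds).and (self_mem_nhdsWithin (s := Ioi 0))).exists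
  exact ⟨c, hc, hcK⟩

theorem measure_convexHull_insert_zero_pos [FiniteDimensional ℝ E] [MeasurableSpace E]
    (μ : Measure E) [μ.IsOpenPosMeasure] (b : Basis ι ℝ E) :
    0 < μ (convexHull ℝ (insert 0 (range b))) := by
  refine μ.measure_pos_of_nonempty_interior
    (interior_convexHull_nonempty_iff_affineSpan_eq_top.2 ?_)
  rw [← AffineSubspace.coe_eq_univ_iff, affineSpan_insert_zero, b.span_eq, Submodule.top_coe]

variable [FiniteDimensional ℝ E] [Fintype ι] [DecidableEq ι]

theorem continuous_det (b : Basis ι ℝ E) : Continuous b.det := by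
  rw [show (b.det : (ι → E) → ℝ) = fun v => (b.toMatrix v).det from funext b.det_apply]
  refine Continuous.matrix_det (continuous_pi fun i => continuous_pi fun j => ?_)
  exact (b.coord i).continuous_of_finiteDimensional.comp (continuous_apply j)

theorem exists_det_ne_zero_forall_abs_det_le (b : Basis ι ℝ E) {K : Set E} (hKc : IsCompact K)
    (h0 : 0 ∈ interior K) :
    ∃ v : ι → E, (∀ i, v i ∈ K) ∧ b.det v ≠ 0 ∧
      ∀ w : ι → E, (∀ i, w i ∈ K) → |b.det w| ≤ |b.det v| := by
  obtain ⟨c, hc, hcK⟩ :=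
    b.exists_pos_forall_smul_mem_of_mem_nhds (mem_interior_iff_mem_nhds.1 h0)
  obtain ⟨v, hv, hmax⟩ := (isCompact_univ_pi fun _ : ι => hKc).exists_isMaxOn
    ⟨_, fun i _ => hcK i⟩ (continuous_abs.comp b.continuous_det).continuousOn
  refine ⟨v, fun i => hv i (mem_univ i), fun hv0 => ?_, fun w hw => hmax fun i _ => hw i⟩
  have hpos : 0 < |b.det fun i => c • b i| := by
    rw [AlternatingMap.map_smul_univ, b.det_self, smul_eq_mul, mul_one]
    positivity
  exact (hpos.trans_le (hmax fun i _ => hcK i)).ne' (by rw [Function.comp_apply, hv0, abs_zero])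

end Module.Basis

section Polar

variable {E : Type*} [NormedAddCommGroup E] [InnerProductSpace ℝ E]

def polarBody (K : Set E) : Set E := {x | ∀ y ∈ K, ⟪x, y⟫ ≤ 1}

theorem zero_mem_polarBody (K : Set E) : (0 : E) ∈ polarBody K := fun y _ => by simp

theorem convex_polarBody (K : Set E) : Convex ℝ (polarBody K) := by
  have : polarBody K = ⋂ y ∈ K, {x : E | ⟪x, y⟫ ≤ 1} := by ext; simp [polarBody]
  rw [this]
  exact convex_iInter₂ fun y _ => convex_halfSpace_le
    (isBoundedBilinearMap_inner.isBoundedLinearMap_left y).toIsLinearMap 1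

theorem polarBody_subset_closedBall {K : Set E} {r : ℝ} (hr : 0 < r)
    (hK : closedBall 0 r ⊆ K) : polarBody K ⊆ closedBall 0 r⁻¹ := by
  intro x hx
  rw [mem_closedBall_zero_iff]
  rcases eq_or_ne x 0 with rfl | hx0
  · rw [norm_zero]; positivity
  have hxpos : 0 < ‖x‖ := norm_pos_iff.2 hx0
  have hy : (r / ‖x‖) • x ∈ K := hK <| by
    rw [mem_closedBall_zero_iff, norm_smul, Real.norm_of_nonneg (by positivity),
      div_mul_cancel₀ _ hxpos.ne']
  have hxy := hx _ hy
  rw [real_inner_smul_right, real_inner_self_eq_norm_sq] at hxy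
  rw [← one_div, le_div_iff₀ hr]
  calc ‖x‖ * r = r / ‖x‖ * ‖x‖ ^ 2 := by field_simp
    _ ≤ 1 := hxy

theorem isBounded_polarBody {K : Set E} (h0 : 0 ∈ interior K) :
    Bornology.IsBounded (polarBody K) := by
  obtain ⟨r, hr, hrK⟩ := nhds_basis_closedBall.mem_iff.1 (mem_interior_iff_mem_nhds.1 h0)
  exact isBounded_closedBall.subset (polarBody_subset_closedBall hr hrK)

variable [FiniteDimensional ℝ E] {ι : Type*} [Fintype ι] [DecidableEq ι]

theorem exists_image_convexHull_subset_and_subset_polarBody (b : OrthonormalBasis ι ℝ E)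
    {K : Set E} (hKc : IsCompact K) (hKconv : Convex ℝ K) (h0 : 0 ∈ interior K) :
    ∃ f g : E →ₗ[ℝ] E, |LinearMap.det f| * |LinearMap.det g| = 1 ∧
      f '' convexHull ℝ (insert 0 (range b)) ⊆ K ∧
      g '' convexHull ℝ (insert 0 (range b)) ⊆ polarBody K := by
  obtain ⟨v, hvK, hdet, hmax⟩ := b.toBasis.exists_det_ne_zero_forall_abs_det_le hKc h0
  obtain ⟨hli, hsp⟩ := b.toBasis.is_basis_iff_det.2 (isUnit_iff_ne_zero.2 hdet)
  set B := Module.Basis.mk hli hsp.ge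
  set e := b.toBasis.equiv B (Equiv.refl ι)
  have hinner (j : ι) (y : E) :
      ⟪LinearMap.adjoint e.symm.toLinearMap (b j), y⟫ = B.coord j y := by
    rw [LinearMap.adjoint_inner_left, ← b.repr_apply_apply, ← b.coe_toBasis_repr_apply]
    simp only [e, LinearEquiv.coe_coe, Module.Basis.equiv, Equiv.refl_symm,
      Module.Basis.reindex_refl, LinearEquiv.symm_trans_apply, LinearEquiv.symm_symm,
      LinearEquiv.apply_symm_apply, Module.Basis.coord_apply]
  refine ⟨e, LinearMap.adjoint e.symm.toLinearMap, ?_, ?_, ?_⟩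
  · rw [LinearMap.det_adjoint, LinearEquiv.det_coe_symm, star_trivial, abs_inv,
      mul_inv_cancel₀ (abs_ne_zero.2 (LinearEquiv.isUnit_det' e).ne_zero)]
  · exact image_convexHull_insert_zero_range_subset b _ hKconv (interior_subset h0)
      fun i => by
        rw [LinearEquiv.coe_coe, ← b.coe_toBasis, Module.Basis.equiv_apply, Equiv.refl_apply,
          Module.Basis.coe_mk]
        exact hvK i
  · refine image_convexHull_insert_zero_range_subset b _ (convex_polarBody K)
      (zero_mem_polarBody K) fun j y hy => ?_
    rw [hinner]
    exact (le_abs_self _).trans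
      (b.toBasis.abs_coord_le_one_of_abs_det_le hli hsp.ge hvK hmax hy j)

end Polar

theorem abs_det_mul_measureReal_le_of_image_subset {E : Type*} [NormedAddCommGroup E]
    [NormedSpace ℝ E] [FiniteDimensional ℝ E] [MeasurableSpace E] [BorelSpace E] (μ : Measure E)
    [μ.IsAddHaarMeasure] {f : E →ₗ[ℝ] E} {s t : Set E} (h : f '' s ⊆ t) (ht : μ t ≠ ∞) :
    |LinearMap.det f| * μ.real s ≤ μ.real t := by
  have := measureReal_mono h ht
  rwa [measureReal_def, Measure.addHaar_image_linearMap, ENNReal.toReal_mul,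
    ENNReal.toReal_ofReal (abs_nonneg _)] at this

theorem exists_pos_le_measureReal_mul_measureReal_polarBody {E : Type*} [NormedAddCommGroup E]
    [InnerProductSpace ℝ E] [FiniteDimensional ℝ E] [MeasurableSpace E] [BorelSpace E]
    (μ : Measure E) [μ.IsAddHaarMeasure] :
    ∃ c : ℝ, 0 < c ∧ ∀ K : Set E, IsCompact K → Convex ℝ K → (0 : E) ∈ interior K →
      c ≤ μ.real K * μ.real (polarBody K) := by
  let b := stdOrthonormalBasis ℝ E
  set Δ := convexHull ℝ (insert 0 (range b))
  have hΔ : 0 < μ.real Δ := ENNReal.toReal_pos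
    (b.toBasis.measure_convexHull_insert_zero_pos μ).ne'
    (((finite_range b).insert 0).isCompact_convexHull (𝕜 := ℝ)).measure_lt_top.ne
  refine ⟨μ.real Δ ^ 2, by positivity, fun K hKc hKconv h0 => ?_⟩
  obtain ⟨f, g, hfg, hf, hg⟩ :=
    exists_image_convexHull_subset_and_subset_polarBody b hKc hKconv h0
  calc μ.real Δ ^ 2 = (|LinearMap.det f| * μ.real Δ) * (|LinearMap.det g| * μ.real Δ) := by
        linear_combination (-(μ.real Δ ^ 2)) * hfg
    _ ≤ μ.real K * μ.real (polarBody K) := by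
        gcongr
        · exact abs_det_mul_measureReal_le_of_image_subset μ hf hKc.measure_lt_top.ne
        · exact abs_det_mul_measureReal_le_of_image_subset μ hg
            (isBounded_polarBody h0).measure_lt_top.ne

theorem mahler_volume_lower_bound_general (d : ℕ) :
    ∃ c : ℝ, 0 < c ∧
      ∀ (K : Set (EuclideanSpace ℝ (Fin d))),
        IsCompact K → Convex ℝ K → (0 : EuclideanSpace ℝ (Fin d)) ∈ interior K →
        c ≤ (volume K).toReal *
            (volume {x : EuclideanSpace ℝ (Fin d) | ∀ y ∈ K, ⟪x, y⟫ ≤ 1}).toReal :=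
  exists_pos_le_measureReal_mul_measureReal_polarBody volume

/-- Mahler volume bound: for every `d ≥ 1` there is `c_d > 0` such that
every convex body `K ⊆ ℝ^d` whose interior contains the origin satisfies
`vol(K) · vol(K°) ≥ c_d`. -/
theorem mahler_volume_lower_bound (d : ℕ) (hd : 1 ≤ d) :
    ∃ c : ℝ, 0 < c ∧
      ∀ (K : Set (EuclideanSpace ℝ (Fin d))),
        IsCompact K → Convex ℝ K → (0 : EuclideanSpace ℝ (Fin d)) ∈ interior K →
        c ≤ (volume K).toReal *
            (volume {x : EuclideanSpace ℝ (Fin d) | ∀ y ∈ K, ⟪x, y⟫ ≤ 1}).toReal :=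
  mahler_volume_lower_bound_general d
end

section
/- Let K ⊆ ℝ^d be a convex body and ε > 0, and suppose K has width at least ε in every direction, i.e. h_K(u) + h_K(−u) ≥ ε for every unit vector u. Let c = (1/vol(K)) ∫_K x dx be the centroid of K. Then the closed Euclidean ball of radius ε/(d+1) centered at c is contained in K. -/
/-!
Fix a direction `u` and let `ℓ = ⟪u, ·⟫` range over `[ℓ p, ℓ p + w]` on `K`, with `p ∈ K`. For
`0 < t ≤ w` the homothety of ratio `t / w` centred at `p` maps `K` into `K ∩ {ℓ ≤ ℓ p + t}`, so the
superlevel set `K ∩ {ℓ > ℓ p + t}` has volume at most `(1 - (t / w) ^ d) vol K`. By the layer cake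
formula, integrating over `t` bounds `ℓ` at the centroid `c` by `ℓ p + d / (d + 1) * w`, that is
`⟪u, c⟫ ≤ h_K(u) - w / (d + 1)`. A point `y` of the ball outside `K` would be separated from `K` by
some unit `u` with `h_K(u) < ⟪u, y⟫ ≤ ⟪u, c⟫ + ε / (d + 1)`, which contradicts this since `ε ≤ w`.
-/

open MeasureTheory Metric Set
open scoped RealInnerProductSpace ENNReal

noncomputable def suppFn {d : ℕ} (K : Set (EuclideanSpace ℝ (Fin d)))
    (u : EuclideanSpace ℝ (Fin d)) : ℝ :=
  sSup ((fun x => ⟪u, x⟫) '' K)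

open Module

section Slab

variable {E : Type*} [NormedAddCommGroup E] [NormedSpace ℝ E] [FiniteDimensional ℝ E]
  [MeasurableSpace E] [BorelSpace E] (μ : Measure E) [μ.IsAddHaarMeasure]
  {K : Set E} (ℓ : StrongDual ℝ E) {p : E} {w : ℝ}

theorem measureReal_superlevel_le (hK : Convex ℝ K) (hKm : MeasurableSet K) (hKμ : μ K ≠ ∞)
    (hp : p ∈ K) (hmax : ∀ x ∈ K, ℓ x ≤ ℓ p + w) {t : ℝ} (ht : 0 < t) (htw : t ≤ w) :
    μ.real ({x | t < ℓ x - ℓ p} ∩ K) ≤ (1 - (t / w) ^ finrank ℝ E) * μ.real K := by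
  set r := t / w
  have hr : 0 ≤ r := div_nonneg ht.le (ht.trans_le htw).le
  set S := AffineMap.homothety p r '' K
  have hSK : S ⊆ K := by
    rintro _ ⟨x, hx, rfl⟩
    rw [AffineMap.homothety_eq_lineMap]
    exact hK.lineMap_mem hp hx ⟨hr, div_le_one_of_le₀ htw (ht.trans_le htw).le⟩
  have hdisj : Disjoint S ({x | t < ℓ x - ℓ p} ∩ K) := by
    rw [Set.disjoint_left]
    rintro _ ⟨x, hx, rfl⟩ ⟨hlt : t < _, -⟩
    have hℓ : ℓ (AffineMap.homothety p r x) = ℓ p + r * (ℓ x - ℓ p) := by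
      simp only [AffineMap.homothety_apply, vsub_eq_sub, vadd_eq_add, map_add, map_smul, map_sub,
        smul_eq_mul]
      ring
    have hrt : r * (ℓ x - ℓ p) ≤ t := by
      calc r * (ℓ x - ℓ p) ≤ r * w := by gcongr; linarith [hmax x hx]
        _ = t := div_mul_cancel₀ t (ht.trans_le htw).ne'
    linarith
  have hSμ : μ.real S = r ^ finrank ℝ E * μ.real K := by
    simp [S, Measure.real, abs_of_nonneg (pow_nonneg hr _), ENNReal.toReal_ofReal (pow_nonneg hr _)]
  have hsum : μ.real S + μ.real ({x | t < ℓ x - ℓ p} ∩ K) ≤ μ.real K := by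
    rw [← measureReal_union hdisj ((measurableSet_lt measurable_const (by fun_prop)).inter hKm)
      (measure_ne_top_of_subset hSK hKμ) (measure_ne_top_of_subset inter_subset_right hKμ)]
    exact measureReal_mono (union_subset hSK inter_subset_right) hKμ
  linarith

theorem integral_one_sub_div_pow (w : ℝ) (n : ℕ) :
    ∫ t in (0 : ℝ)..w, (1 - (t / w) ^ n) = n / (n + 1) * w := by
  rcases eq_or_ne w 0 with rfl | hw
  · simp
  rw [intervalIntegral.integral_sub intervalIntegrable_const
    ((by fun_prop : Continuous fun t : ℝ => (t / w) ^ n).intervalIntegrable _ _)]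
  simp only [div_pow, intervalIntegral.integral_div, integral_pow, intervalIntegral.integral_const]
  field_simp
  ring

theorem setIntegral_sub_min_le (hKc : IsCompact K) (hK : Convex ℝ K) (hp : p ∈ K)
    (hmin : ∀ x ∈ K, ℓ p ≤ ℓ x) (hmax : ∀ x ∈ K, ℓ x ≤ ℓ p + w) :
    ∫ x in K, (ℓ x - ℓ p) ∂μ ≤ finrank ℝ E / (finrank ℝ E + 1) * w * μ.real K := by
  have hw : 0 ≤ w := by linarith [hmax p hp]
  have hKμ : μ K ≠ ∞ := hKc.measure_lt_top.ne
  have hKm : MeasurableSet K := hKc.measurableSet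
  have hint : IntegrableOn (fun x => ℓ x - ℓ p) K μ :=
    (ℓ.continuous.sub continuous_const).continuousOn.integrableOn_compact hKc
  have hnonneg : 0 ≤ᵐ[μ.restrict K] fun x => ℓ x - ℓ p :=
    (ae_restrict_iff' hKm).mpr (.of_forall fun x hx => sub_nonneg.mpr (hmin x hx))
  have hsuperlevel (t : ℝ) :
      (μ.restrict K).real {x | t < ℓ x - ℓ p} = μ.real ({x | t < ℓ x - ℓ p} ∩ K) :=
    measureReal_restrict_apply (measurableSet_lt measurable_const (by fun_prop))
  have hvanish : ∀ t ∈ Ioi 0 \ Ioc 0 w, μ.real ({x | t < ℓ x - ℓ p} ∩ K) = 0 := by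
    rintro t ⟨ht0, htw⟩
    have hwt : w < t := lt_of_not_ge fun h => htw ⟨ht0, h⟩
    rw [show {x | t < ℓ x - ℓ p} ∩ K = ∅ from
      eq_empty_of_forall_notMem fun x ⟨hlt, hx⟩ => by linarith [hmax x hx, hlt.out], measureReal_empty]
  rw [hint.integral_eq_integral_meas_lt hnonneg]
  simp only [hsuperlevel]
  calc ∫ t in Ioi 0, μ.real ({x | t < ℓ x - ℓ p} ∩ K)
      = ∫ t in Ioc 0 w, μ.real ({x | t < ℓ x - ℓ p} ∩ K) :=
        setIntegral_eq_of_subset_of_ae_sdiff_eq_zero nullMeasurableSet_Ioi Ioc_subset_Ioi_self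
          (.of_forall hvanish)
    _ ≤ ∫ t in Ioc 0 w, (1 - (t / w) ^ finrank ℝ E) * μ.real K :=
        integral_mono_of_nonneg (.of_forall fun _ => measureReal_nonneg)
          ((by fun_prop : Continuous fun t : ℝ => (1 - (t / w) ^ finrank ℝ E) * μ.real K)
            |>.integrableOn_Ioc)
          ((ae_restrict_iff' measurableSet_Ioc).mpr (.of_forall fun t ⟨ht0, htw⟩ =>
            measureReal_superlevel_le μ ℓ hK hKm hKμ hp hmax ht0 htw))
    _ = finrank ℝ E / (finrank ℝ E + 1) * w * μ.real K := by
      rw [integral_mul_const, ← intervalIntegral.integral_of_le hw, integral_one_sub_div_pow]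

theorem apply_centroid_le (hKc : IsCompact K) (hK : Convex ℝ K) (hKμ : μ K ≠ 0) (hp : p ∈ K)
    (hmin : ∀ x ∈ K, ℓ p ≤ ℓ x) (hmax : ∀ x ∈ K, ℓ x ≤ ℓ p + w) :
    ℓ ((μ.real K)⁻¹ • ∫ x in K, x ∂μ) ≤ ℓ p + finrank ℝ E / (finrank ℝ E + 1) * w := by
  have hV : 0 < μ.real K := ENNReal.toReal_pos hKμ hKc.measure_lt_top.ne
  have hint : ∫ x in K, (ℓ x - ℓ p) ∂μ = ℓ (∫ x in K, x ∂μ) - μ.real K * ℓ p := by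
    rw [integral_sub (ℓ.continuous.continuousOn.integrableOn_compact hKc)
      (integrableOn_const hKc.measure_lt_top.ne), setIntegral_const, smul_eq_mul,
      ← ℓ.integral_comp_comm (φ := fun x => x) (continuousOn_id.integrableOn_compact hKc)]
  have key := setIntegral_sub_min_le μ ℓ hKc hK hp hmin hmax
  rw [hint] at key
  rw [map_smul, smul_eq_mul, inv_mul_le_iff₀ hV]
  linarith

end Slab

section SupportFunction

variable {d : ℕ} {K : Set (EuclideanSpace ℝ (Fin d))}

theorem inner_le_suppFn (hK : Bornology.IsBounded K) {x : EuclideanSpace ℝ (Fin d)} (hx : x ∈ K)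
    (u : EuclideanSpace ℝ (Fin d)) : ⟪u, x⟫ ≤ suppFn K u :=
  le_csSup ((innerSL ℝ u).lipschitz.isBounded_image hK).bddAbove ⟨x, hx, rfl⟩

theorem suppFn_le (hne : K.Nonempty) {u : EuclideanSpace ℝ (Fin d)} {c : ℝ}
    (h : ∀ x ∈ K, ⟪u, x⟫ ≤ c) : suppFn K u ≤ c :=
  csSup_le (hne.image _) (forall_mem_image.2 h)

theorem inner_centroid_le (hKc : IsCompact K) (hK : Convex ℝ K) (hKμ : volume K ≠ 0)
    (u : EuclideanSpace ℝ (Fin d)) :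
    ⟪u, (volume K).toReal⁻¹ • ∫ x in K, x⟫ ≤
      suppFn K u - (suppFn K u + suppFn K (-u)) / (d + 1) := by
  have hne := nonempty_of_measure_ne_zero hKμ
  obtain ⟨p, hp, hmin⟩ := hKc.exists_isMinOn hne (innerSL ℝ u).continuous.continuousOn
  have hmax (x) (hx : x ∈ K) : innerSL ℝ u x ≤ innerSL ℝ u p + (suppFn K u - ⟪u, p⟫) := by
    simpa using inner_le_suppFn hKc.isBounded hx u
  have hcentroid := apply_centroid_le volume (innerSL ℝ u) hKc hK hKμ hp (fun x hx => hmin hx) hmax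
  have hneg : suppFn K (-u) ≤ -⟪u, p⟫ :=
    suppFn_le hne fun x hx => by simpa [inner_neg_left] using hmin hx
  simp only [innerSL_apply_apply, finrank_euclideanSpace_fin, measureReal_def] at hcentroid
  have hwidth : (suppFn K u + suppFn K (-u)) / (d + 1) ≤ (suppFn K u - ⟪u, p⟫) / (d + 1) := by
    gcongr; linarith
  have hd : ⟪u, p⟫ + d / (d + 1) * (suppFn K u - ⟪u, p⟫) =
      suppFn K u - (suppFn K u - ⟪u, p⟫) / (d + 1) := by
    field_simp; ring
  linarith

theorem exists_suppFn_lt_inner (hKc : IsClosed K) (hK : Convex ℝ K) (hne : K.Nonempty)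
    {y : EuclideanSpace ℝ (Fin d)} (hy : y ∉ K) : ∃ u, ‖u‖ = 1 ∧ suppFn K u < ⟪u, y⟫ := by
  obtain ⟨f, s, hf, hs⟩ := geometric_hahn_banach_closed_point hK hKc hy
  set v := (InnerProductSpace.toDual ℝ _).symm f
  have hv (x : EuclideanSpace ℝ (Fin d)) : ⟪v, x⟫ = f x := InnerProductSpace.toDual_symm_apply
  have hv0 : v ≠ 0 := by
    intro h
    obtain ⟨q, hq⟩ := hne
    have := (hf q hq).trans hs
    simp only [← hv, h, inner_zero_left, lt_self_iff_false] at this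
  have hc : 0 < ‖v‖⁻¹ := by positivity
  refine ⟨‖v‖⁻¹ • v, norm_smul_inv_norm hv0, ?_⟩
  calc suppFn K (‖v‖⁻¹ • v) ≤ ‖v‖⁻¹ * s :=
        suppFn_le hne fun x hx => by rw [real_inner_smul_left, hv]; gcongr; exact (hf x hx).le
    _ < ⟪‖v‖⁻¹ • v, y⟫ := by rw [real_inner_smul_left, hv]; gcongr

end SupportFunction

theorem centroid_ball_in_body_general (d : ℕ)
    (K : Set (EuclideanSpace ℝ (Fin d)))
    (hKc : IsCompact K) (hKconv : Convex ℝ K) (hKint : (interior K).Nonempty)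
    (ε : ℝ)
    (hwidth : ∀ u : EuclideanSpace ℝ (Fin d), ‖u‖ = 1 → ε ≤ suppFn K u + suppFn K (-u)) :
    closedBall (((volume K).toReal)⁻¹ • ∫ x in K, x) (ε / ((d : ℝ) + 1)) ⊆ K := by
  have hKμ : volume K ≠ 0 := (Measure.measure_pos_of_nonempty_interior volume hKint).ne'
  intro y hy
  by_contra hyK
  obtain ⟨u, hu, hsep⟩ :=
    exists_suppFn_lt_inner hKc.isClosed hKconv (nonempty_of_measure_ne_zero hKμ) hyK
  have hc := inner_centroid_le hKc hKconv hKμ u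
  have hyc : ⟪u, y - (volume K).toReal⁻¹ • ∫ x in K, x⟫ ≤ ε / (d + 1) :=
    (real_inner_le_norm _ _).trans (by rwa [hu, one_mul, ← dist_eq_norm, ← mem_closedBall])
  have hε : ε / (d + 1) ≤ (suppFn K u + suppFn K (-u)) / (d + 1) := by
    gcongr; exact hwidth u hu
  rw [inner_sub_right] at hyc
  linarith

/-- if the convex body `K ⊆ ℝ^d` has width at least `ε` in every direction,
then the closed ball of radius `ε/(d+1)` centered at the centroid of `K` is contained in `K`. -/
theorem centroid_ball_in_body (d : ℕ) (hd : 1 ≤ d)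
    (K : Set (EuclideanSpace ℝ (Fin d)))
    (hKc : IsCompact K) (hKconv : Convex ℝ K) (hKint : (interior K).Nonempty)
    (ε : ℝ) (hε : 0 < ε)
    (hwidth : ∀ u : EuclideanSpace ℝ (Fin d), ‖u‖ = 1 → ε ≤ suppFn K u + suppFn K (-u)) :
    closedBall (((volume K).toReal)⁻¹ • ∫ x in K, x) (ε / ((d : ℝ) + 1)) ⊆ K :=
  centroid_ball_in_body_general d K hKc hKconv hKint ε hwidth
end

section
/- Let U ⊆ ℝ^d be a U-shaped closed convex set, let q be a frontier point of U, let h be a non-vertical supporting hyperplane of U at q with outward unit normal u (so ⟨u, x − q⟩ ≤ 0 for all x ∈ U, and u_d < 0), let H⁻ = {x ∈ ℝ^d : ⟨u, x − q⟩ ≥ 0}, and let ε > 0. Set a = q − ε e_d, T = conv(U ∪ {a}) ∩ H⁻, and T′ = a + 2(T − a). Then T + ε e_d ⊆ U ∩ (H⁻ + ε e_d) and U ∩ (H⁻ + ε e_d) ⊆ T′. -/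
/-! Lifting by `ε e_d` maps `U` into itself (`U` is U-shaped) and the apex `a = q - ε e_d` onto
`q ∈ U`; since `U` is convex, the lift maps all of `conv(U ∪ {a})` into `U`. Conversely, a point
`y + ε e_d ∈ U` with `y ∈ H⁻` is the image under the homothety of ratio `2` centred at `a` of
the midpoint of `a` and `y + ε e_d`, which is also the midpoint of `q` and `y`, so it lies in
`conv(U ∪ {a})` and in `H⁻`. -/

open MeasureTheory Metric Set
open scoped RealInnerProductSpace ENNReal

noncomputable section

/-- The last standard basis vector `e_d` of `ℝ^d` (`d = n + 1`). -/
def ed (n : ℕ) : EuclideanSpace ℝ (Fin (n + 1)) := EuclideanSpace.single (Fin.last n) 1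

section

variable {E : Type*} [AddCommGroup E] [Module ℝ E]

theorem convexHull_union_singleton_subset_preimage_add {U : Set E} (hU : Convex ℝ U) {v a : E}
    (hUv : ∀ x ∈ U, x + v ∈ U) (ha : a + v ∈ U) :
    convexHull ℝ (U ∪ {a}) ⊆ (· + v) ⁻¹' U := by
  refine convexHull_min (union_subset hUv (singleton_subset_iff.2 ha)) ?_
  simpa only [add_comm _ v] using hU.translate_preimage_right v

theorem midpoint_sub_add_eq_midpoint (x y v : E) :
    midpoint ℝ (x - v) (y + v) = midpoint ℝ x y := by
  simp only [midpoint_eq_smul_add, sub_add_add_cancel]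

theorem add_two_smul_midpoint_sub (a z : E) : a + (2 : ℝ) • (midpoint ℝ a z - a) = z := by
  rw [midpoint_sub_left, smul_smul, mul_invOf_self, one_smul, add_sub_cancel]

end

theorem inner_midpoint_sub_left {F : Type*} [NormedAddCommGroup F] [InnerProductSpace ℝ F]
    (u q y : F) : ⟪u, midpoint ℝ q y - q⟫ = ⟪u, y - q⟫ / 2 := by
  rw [midpoint_sub_left, real_inner_smul_right, invOf_eq_inv, inv_mul_eq_div]

theorem dual_cap_cone_sandwich_general (n : ℕ)
    (U : Set (EuclideanSpace ℝ (Fin (n + 1)))) (hUcl : IsClosed U) (hUconv : Convex ℝ U)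
    (hUsh : ∀ x ∈ U, ∀ t : ℝ, 0 ≤ t → x + t • ed n ∈ U)
    (q u : EuclideanSpace ℝ (Fin (n + 1))) (hq : q ∈ frontier U)
    (ε : ℝ) (hε : 0 < ε) :
    ((fun x => x + ε • ed n) ''
        (convexHull ℝ (U ∪ {q - ε • ed n}) ∩ {x | 0 ≤ ⟪u, x - q⟫})
      ⊆ U ∩ ((fun x => x + ε • ed n) '' {x | 0 ≤ ⟪u, x - q⟫})) ∧
    (U ∩ ((fun x => x + ε • ed n) '' {x | 0 ≤ ⟪u, x - q⟫})
      ⊆ (fun x => (q - ε • ed n) + (2 : ℝ) • (x - (q - ε • ed n))) ''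
          (convexHull ℝ (U ∪ {q - ε • ed n}) ∩ {x | 0 ≤ ⟪u, x - q⟫})) := by
  have hqU : q ∈ U := hUcl.frontier_subset hq
  constructor
  · rintro _ ⟨x, ⟨hxT, hxH⟩, rfl⟩
    have hlift := convexHull_union_singleton_subset_preimage_add hUconv
      (fun x hx => hUsh x hx ε hε.le) (by rwa [sub_add_cancel])
    exact ⟨hlift hxT, x, hxH, rfl⟩
  · rintro _ ⟨hzU, y, hyH, rfl⟩
    refine ⟨midpoint ℝ (q - ε • ed n) (y + ε • ed n), ⟨?_, ?_⟩, add_two_smul_midpoint_sub _ _⟩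
    · exact (convex_convexHull ℝ _).midpoint_mem
        (subset_convexHull ℝ _ (mem_union_right _ rfl))
        (subset_convexHull ℝ _ (mem_union_left _ hzU))
    · show 0 ≤ ⟪u, _ - q⟫
      rw [midpoint_sub_add_eq_midpoint, inner_midpoint_sub_left]
      exact div_nonneg hyH zero_le_two

/-- with `a = q − ε e_d`, `T = conv(U ∪ {a}) ∩ H⁻` and `T′ = a + 2(T − a)`,
we have `T + ε e_d ⊆ U ∩ (H⁻ + ε e_d)` and `U ∩ (H⁻ + ε e_d) ⊆ T′`. -/
theorem dual_cap_cone_sandwich (n : ℕ) (hn : 1 ≤ n)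
    (U : Set (EuclideanSpace ℝ (Fin (n + 1)))) (hUcl : IsClosed U) (hUconv : Convex ℝ U)
    (hUsh : ∀ x ∈ U, ∀ t : ℝ, 0 ≤ t → x + t • ed n ∈ U)
    (q u : EuclideanSpace ℝ (Fin (n + 1))) (hq : q ∈ frontier U) (hu : ‖u‖ = 1)
    (hsupp : ∀ x ∈ U, ⟪u, x - q⟫ ≤ 0) (hud : u (Fin.last n) < 0)
    (ε : ℝ) (hε : 0 < ε) :
    ((fun x => x + ε • ed n) ''
        (convexHull ℝ (U ∪ {q - ε • ed n}) ∩ {x | 0 ≤ ⟪u, x - q⟫})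
      ⊆ U ∩ ((fun x => x + ε • ed n) '' {x | 0 ≤ ⟪u, x - q⟫})) ∧
    (U ∩ ((fun x => x + ε • ed n) '' {x | 0 ≤ ⟪u, x - q⟫})
      ⊆ (fun x => (q - ε • ed n) + (2 : ℝ) • (x - (q - ε • ed n))) ''
          (convexHull ℝ (U ∪ {q - ε • ed n}) ∩ {x | 0 ≤ ⟪u, x - q⟫})) :=
  dual_cap_cone_sandwich_general n U hUcl hUconv hUsh q u hq ε hε

end
end

section
/- Let U ⊆ ℝ^d be a U-shaped closed convex set, let q be a frontier point of U, let h be a non-vertical supporting hyperplane of U at q with outward unit normal u (so ⟨u, x − q⟩ ≤ 0 for all x ∈ U, and u_d < 0), let H⁻ = {x ∈ ℝ^d : ⟨u, x − q⟩ ≥ 0}, and let ε > 0. Set a = q − ε e_d and T = conv(U ∪ {a}) ∩ H⁻. If U ∩ (H⁻ + ε e_d) is bounded, then vol(T) ≤ vol(U ∩ (H⁻ + ε e_d)) ≤ 2^d · vol(T), where vol denotes Lebesgue measure on ℝ^d. -/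
open MeasureTheory Metric Set
open scoped RealInnerProductSpace ENNReal
open scoped Pointwise

noncomputable section

/-- with `a = q − ε e_d` and `T = conv(U ∪ {a}) ∩ H⁻`, if
`U ∩ (H⁻ + ε e_d)` is bounded then `vol T ≤ vol (U ∩ (H⁻ + ε e_d)) ≤ 2^d · vol T`. -/
theorem dual_cap_volume_sandwich (n : ℕ) (hn : 1 ≤ n)
    (U : Set (EuclideanSpace ℝ (Fin (n + 1)))) (hUcl : IsClosed U) (hUconv : Convex ℝ U)
    (hUsh : ∀ x ∈ U, ∀ t : ℝ, 0 ≤ t → x + t • ed n ∈ U)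
    (q u : EuclideanSpace ℝ (Fin (n + 1))) (hq : q ∈ frontier U) (hu : ‖u‖ = 1)
    (hsupp : ∀ x ∈ U, ⟪u, x - q⟫ ≤ 0) (hud : u (Fin.last n) < 0)
    (ε : ℝ) (hε : 0 < ε)
    (hbdd : Bornology.IsBounded (U ∩ ((fun x => x + ε • ed n) '' {x | 0 ≤ ⟪u, x - q⟫}))) :
    volume (convexHull ℝ (U ∪ {q - ε • ed n}) ∩ {x | 0 ≤ ⟪u, x - q⟫})
        ≤ volume (U ∩ ((fun x => x + ε • ed n) '' {x | 0 ≤ ⟪u, x - q⟫})) ∧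
    volume (U ∩ ((fun x => x + ε • ed n) '' {x | 0 ≤ ⟪u, x - q⟫}))
        ≤ 2 ^ (n + 1) *
          volume (convexHull ℝ (U ∪ {q - ε • ed n}) ∩ {x | 0 ≤ ⟪u, x - q⟫}) := by
  have hqU : q ∈ U := hUcl.frontier_subset hq
  -- description of the convex hull
  have hhull : ∀ x ∈ convexHull ℝ (U ∪ {q - ε • ed n}), ∃ y ∈ U, x ∈ segment ℝ (q - ε • ed n) y := by
    intro x hx
    rw [union_singleton, convexHull_insert ⟨q, hqU⟩, convexJoin_singleton_left,
      hUconv.convexHull_eq] at hx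
    simpa using hx
  have hseg : ∀ y ∈ U, segment ℝ (q - ε • ed n) y ⊆ convexHull ℝ (U ∪ {q - ε • ed n}) := by
    intro y hy
    rw [union_singleton, convexHull_insert ⟨q, hqU⟩, convexJoin_singleton_left]
    exact subset_iUnion₂_of_subset y (subset_convexHull ℝ U hy) subset_rfl
  -- first inclusion : T + ε e ⊆ C
  have h1 : (fun x => x + ε • ed n) ''
      (convexHull ℝ (U ∪ {q - ε • ed n}) ∩ {x | 0 ≤ ⟪u, x - q⟫})
      ⊆ U ∩ ((fun x => x + ε • ed n) '' {x | 0 ≤ ⟪u, x - q⟫}) := by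
    rintro _ ⟨x, ⟨hx1, hx2⟩, rfl⟩
    refine ⟨?_, ⟨x, hx2, rfl⟩⟩
    obtain ⟨y, hy, σ, τ, hσ, hτ, hστ, rfl⟩ := hhull x hx1
    show σ • (q - ε • ed n) + τ • y + ε • ed n ∈ U
    have hrw : σ • (q - ε • ed n) + τ • y + ε • ed n
        = σ • q + τ • (y + ε • ed n) := by
      have h1 : σ = 1 - τ := by linarith
      rw [h1]; module
    rw [hrw]
    exact hUconv hqU (hUsh y hy ε hε.le) hσ hτ hστ
  -- second inclusion : (C + a)/2 ⊆ T
  have h2 : (fun x => (2⁻¹ : ℝ) • x + (2⁻¹ : ℝ) • (q - ε • ed n)) ''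
      (U ∩ ((fun x => x + ε • ed n) '' {x | 0 ≤ ⟪u, x - q⟫}))
      ⊆ convexHull ℝ (U ∪ {q - ε • ed n}) ∩ {x | 0 ≤ ⟪u, x - q⟫} := by
    rintro _ ⟨x, ⟨hxU, w, hw, rfl⟩, rfl⟩
    constructor
    · exact hseg _ hxU ⟨2⁻¹, 2⁻¹, by norm_num, by norm_num, by norm_num, add_comm _ _⟩
    · have hrw : (2⁻¹ : ℝ) • (w + ε • ed n) + (2⁻¹ : ℝ) • (q - ε • ed n) - q
          = (2⁻¹ : ℝ) • (w - q) := by module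
      have hw' : (0:ℝ) ≤ ⟪u, w - q⟫ := hw
      show (0:ℝ) ≤ ⟪u, _⟫
      rw [hrw, real_inner_smul_right]
      linarith
  -- volumes
  have vol1 : volume (convexHull ℝ (U ∪ {q - ε • ed n}) ∩ {x | 0 ≤ ⟪u, x - q⟫})
      ≤ volume (U ∩ ((fun x => x + ε • ed n) '' {x | 0 ≤ ⟪u, x - q⟫})) := by
    calc volume (convexHull ℝ (U ∪ {q - ε • ed n}) ∩ {x | 0 ≤ ⟪u, x - q⟫})
        = volume ((fun x => x + ε • ed n) ''
            (convexHull ℝ (U ∪ {q - ε • ed n}) ∩ {x | 0 ≤ ⟪u, x - q⟫})) := by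
          rw [image_add_right, measure_preimage_add_right]
      _ ≤ _ := measure_mono h1
  refine ⟨vol1, ?_⟩
  -- volume of half-scaled copy
  have him : volume ((fun x => (2⁻¹ : ℝ) • x + (2⁻¹ : ℝ) • (q - ε • ed n)) ''
      (U ∩ ((fun x => x + ε • ed n) '' {x | 0 ≤ ⟪u, x - q⟫})))
      = ENNReal.ofReal ((2⁻¹ : ℝ) ^ (n + 1))
        * volume (U ∩ ((fun x => x + ε • ed n) '' {x | 0 ≤ ⟪u, x - q⟫})) := by
    have : (fun x : EuclideanSpace ℝ (Fin (n+1)) =>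
        (2⁻¹ : ℝ) • x + (2⁻¹ : ℝ) • (q - ε • ed n)) ''
        (U ∩ ((fun x => x + ε • ed n) '' {x | 0 ≤ ⟪u, x - q⟫}))
        = (fun x => x + (2⁻¹ : ℝ) • (q - ε • ed n)) ''
          ((2⁻¹ : ℝ) • (U ∩ ((fun x => x + ε • ed n) '' {x | 0 ≤ ⟪u, x - q⟫}))) := by
      rw [← Set.image_smul, image_image]
    rw [this, image_add_right, measure_preimage_add_right,
      Measure.addHaar_smul_of_nonneg volume (by norm_num : (0:ℝ) ≤ 2⁻¹),
      finrank_euclideanSpace, Fintype.card_fin]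
  have key : volume (U ∩ ((fun x => x + ε • ed n) '' {x | 0 ≤ ⟪u, x - q⟫}))
      = 2 ^ (n + 1) * volume ((fun x => (2⁻¹ : ℝ) • x + (2⁻¹ : ℝ) • (q - ε • ed n)) ''
        (U ∩ ((fun x => x + ε • ed n) '' {x | 0 ≤ ⟪u, x - q⟫}))) := by
    rw [him, ← mul_assoc]
    have h2 : (2 : ℝ≥0∞) ^ (n + 1) * ENNReal.ofReal ((2⁻¹ : ℝ) ^ (n + 1)) = 1 := by
      rw [ENNReal.ofReal_pow (by norm_num), ← mul_pow,
        ENNReal.ofReal_inv_of_pos two_pos, ENNReal.ofReal_ofNat,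
        ENNReal.mul_inv_cancel two_ne_zero ENNReal.ofNat_ne_top, one_pow]
    rw [h2, one_mul]
  rw [key]
  exact mul_le_mul_right (measure_mono h2) _

end
end
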